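/- Let G_b = (V,E_b) be a finite simple graph with maximum degree at most Δ and expansion φ(G_b) ≥ α_b for some α_b > 0. Let D ⊆ E_b, let A be the set of endpoints of edges in D, and let G = (V, E_b∖D). Let V_H ⊆ V, let H = G[V_H] be the subgraph of G induced by V_H, let A_H be the set of endpoints of edges in ∂_G(V_H), and let B_H = (A ∪ A_H) ∩ V_H. Set σ = α_b/(2Δ). Then for every α' < α_b/2, every nonempty S ⊆ V_H with |S| ≤ |V_H∖S| and φ_H(S) < α' is (B_H,σ)-overlapping in H, i.e. |S ∩ B_H| ≥ σ·|S|. -/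

import Mathlib

/-- Edges of `G` with one endpoint in `S` and the other endpoint in `U \ S`:
the cut edges `∂(S)` of `S`, inside the subgraph of `G` induced by `U` (when `S ⊆ U`). -/
def cutEdgesIn {V : Type*} (G : SimpleGraph V) (U S : Set V) : Set (Sym2 V) :=
  {e | e ∈ G.edgeSet ∧ ∃ u v, e = s(u, v) ∧ u ∈ S ∧ v ∈ U ∧ v ∉ S}

/-- `δ(S)`, the number of cut edges of `S` inside the subgraph induced by `U`. -/
noncomputable def deltaIn {V : Type*} (G : SimpleGraph V) (U S : Set V) : ℕ :=
  (cutEdgesIn G U S).ncard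

/-- The expansion `φ(S)` of the cut `S` inside the subgraph of `G` induced by `U`. -/
noncomputable def phiIn {V : Type*} (G : SimpleGraph V) (U S : Set V) : ℝ :=
  (deltaIn G U S : ℝ) / min (S.ncard : ℝ) ((U \ S).ncard : ℝ)

/-!
An edge leaving `S` in `G_b` is either still a cut edge of `S` in `H`, or it was deleted or
leaves `V_H`; in the latter two cases its endpoint in `S` lies in `B_H`. With maximum degree `Δ`
this gives `α_b |S| ≤ δ_{G_b}(S) ≤ δ_H(S) + Δ |S ∩ B_H| < (α_b / 2) |S| + Δ |S ∩ B_H|`.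
-/

theorem Set.ncard_biUnion_le_mul {ι α : Type*} {t : Set ι} (ht : t.Finite) (s : ι → Set α)
    {n : ℕ} (hs : ∀ i ∈ t, (s i).ncard ≤ n) : (⋃ i ∈ t, s i).ncard ≤ t.ncard * n := by
  calc (⋃ i ∈ t, s i).ncard ≤ ∑ i ∈ ht.toFinset, (s i).ncard := by
        simpa only [Set.Finite.mem_toFinset] using ht.toFinset.set_ncard_biUnion_le s
    _ ≤ ht.toFinset.card • n :=
        Finset.sum_le_card_nsmul _ _ _ fun i hi ↦ hs i (ht.mem_toFinset.mp hi)
    _ = t.ncard * n := by rw [smul_eq_mul, Set.ncard_eq_toFinset_card t ht]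

namespace SimpleGraph

variable {V : Type*}

theorem ncard_incidenceSet (G : SimpleGraph V) (v : V) :
    (G.incidenceSet v).ncard = (G.neighborSet v).ncard := by
  classical exact Nat.card_congr (G.incidenceSetEquivNeighborSet v)

def edgeEndpoints (F : Set (Sym2 V)) : Set V := {v | ∃ e ∈ F, v ∈ e}

/-- The set `B_H` of the paper, for `H = (G ∖ D)[U]`. -/
def exposedVertices (G : SimpleGraph V) (D : Set (Sym2 V)) (U : Set V) : Set V :=
  (edgeEndpoints D ∪ edgeEndpoints (cutEdgesIn (G.deleteEdges D) Set.univ U)) ∩ U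

theorem cutEdgesIn_univ_subset (G : SimpleGraph V) (D : Set (Sym2 V)) {U S : Set V}
    (hSU : S ⊆ U) :
    cutEdgesIn G Set.univ S ⊆ cutEdgesIn (G.deleteEdges D) U S ∪
      ⋃ v ∈ S ∩ G.exposedVertices D U, G.incidenceSet v := by
  rintro _ ⟨he, u, v, rfl, hu, -, hv⟩
  have hexposed (huB : u ∈ edgeEndpoints D ∪
      edgeEndpoints (cutEdgesIn (G.deleteEdges D) Set.univ U)) :
      s(u, v) ∈ cutEdgesIn (G.deleteEdges D) U S ∪
        ⋃ w ∈ S ∩ G.exposedVertices D U, G.incidenceSet w :=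
    Or.inr <| Set.mem_biUnion ⟨hu, huB, hSU hu⟩ ⟨he, Sym2.mem_mk_left u v⟩
  by_cases heD : s(u, v) ∈ D
  · exact hexposed <| Or.inl ⟨_, heD, Sym2.mem_mk_left u v⟩
  have he' : s(u, v) ∈ (G.deleteEdges D).edgeSet := by
    rw [edgeSet_deleteEdges]
    exact ⟨he, heD⟩
  by_cases hvU : v ∈ U
  · exact Or.inl ⟨he', u, v, rfl, hu, hvU, hv⟩
  · exact hexposed <| Or.inr ⟨_, ⟨he', u, v, rfl, hSU hu, trivial, hvU⟩, Sym2.mem_mk_left u v⟩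

theorem deltaIn_univ_le [Finite V] (G : SimpleGraph V) {Δ : ℕ}
    (hdeg : ∀ v, (G.neighborSet v).ncard ≤ Δ) (D : Set (Sym2 V)) {U S : Set V} (hSU : S ⊆ U) :
    deltaIn G Set.univ S ≤
      deltaIn (G.deleteEdges D) U S + (S ∩ G.exposedVertices D U).ncard * Δ :=
  calc deltaIn G Set.univ S
      ≤ (cutEdgesIn (G.deleteEdges D) U S ∪
          ⋃ v ∈ S ∩ G.exposedVertices D U, G.incidenceSet v).ncard :=
        Set.ncard_le_ncard (cutEdgesIn_univ_subset G D hSU)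
    _ ≤ _ := (Set.ncard_union_le _ _).trans <| Nat.add_le_add_left
        (Set.ncard_biUnion_le_mul (Set.toFinite _) _ fun v _ ↦
          (G.ncard_incidenceSet v).trans_le (hdeg v)) _

theorem phiIn_eq_of_ncard_le (G : SimpleGraph V) {U S : Set V}
    (h : S.ncard ≤ (U \ S).ncard) : phiIn G U S = deltaIn G U S / S.ncard := by
  rw [phiIn, min_eq_left (by exact_mod_cast h)]

end SimpleGraph

theorem stmt7_general {V : Type*} [Fintype V] (Gb : SimpleGraph V) (Δ : ℕ) (αb : ℝ)
    (hdeg : ∀ v : V, (Gb.neighborSet v).ncard ≤ Δ)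
    (hexp : ∀ S : Set V, S.Nonempty → S ≠ Set.univ → αb ≤ phiIn Gb Set.univ S)
    (D : Set (Sym2 V)) (VH : Set V) (α' : ℝ) (hα' : α' < αb / 2)
    (S : Set V) (hSsub : S ⊆ VH) (hSne : S.Nonempty)
    (hSsize : S.ncard ≤ (VH \ S).ncard)
    (hSphi : phiIn (Gb.deleteEdges D) VH S < α') :
    (αb / (2 * (Δ : ℝ))) * (S.ncard : ℝ) ≤
      ((S ∩ (({v : V | ∃ e ∈ D, v ∈ e} ∪
        {v : V | ∃ e ∈ cutEdgesIn (Gb.deleteEdges D) Set.univ VH, v ∈ e}) ∩ VH)).ncard : ℝ) := by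
  have hS : (0 : ℝ) < S.ncard := mod_cast hSne.ncard_pos
  have hSsize' : S.ncard ≤ (Set.univ \ S).ncard :=
    hSsize.trans <| Set.ncard_le_ncard <| Set.sdiff_subset_sdiff_left <| Set.subset_univ VH
  have hSuniv : S ≠ Set.univ := by
    rintro rfl
    simp only [Set.sdiff_self, Set.ncard_empty, nonpos_iff_eq_zero] at hSsize'
    exact hS.ne' (mod_cast hSsize')
  have hlow : αb * S.ncard ≤ deltaIn Gb Set.univ S := by
    have h := hexp S hSne hSuniv
    rwa [Gb.phiIn_eq_of_ncard_le hSsize', le_div_iff₀ hS] at h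
  have hhigh : deltaIn (Gb.deleteEdges D) VH S < α' * S.ncard := by
    rwa [(Gb.deleteEdges D).phiIn_eq_of_ncard_le hSsize, div_lt_iff₀ hS] at hSphi
  have hcount : (deltaIn Gb Set.univ S : ℝ) ≤ deltaIn (Gb.deleteEdges D) VH S +
      (S ∩ Gb.exposedVertices D VH).ncard * Δ := mod_cast Gb.deltaIn_univ_le hdeg D hSsub
  rcases Nat.eq_zero_or_pos Δ with rfl | hΔ
  · simp
  change _ ≤ ((S ∩ Gb.exposedVertices D VH).ncard : ℝ)
  rw [div_mul_eq_mul_div, div_le_iff₀ (by positivity)]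
  nlinarith [mul_le_mul_of_nonneg_right hα'.le hS.le]

/-- Let `G_b` have maximum degree ≤ `Δ` and expansion `φ(G_b) ≥ α_b > 0`,
`D ⊆ E_b`, `A` the endpoints of `D`, `G = (V, E_b ∖ D)`, `H = G[V_H]`, `A_H` the endpoints of
`∂_G(V_H)`, `B_H = (A ∪ A_H) ∩ V_H`, and `σ = α_b/(2Δ)`. Then for every `α' < α_b/2`, every
nonempty `S ⊆ V_H` with `|S| ≤ |V_H ∖ S|` and `φ_H(S) < α'` is `(B_H, σ)`-overlapping in `H`,
i.e. `|S ∩ B_H| ≥ σ·|S|`. -/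
theorem stmt7 {V : Type*} [Fintype V] (Gb : SimpleGraph V) (Δ : ℕ) (αb : ℝ) (hαb : 0 < αb)
    (hdeg : ∀ v : V, (Gb.neighborSet v).ncard ≤ Δ)
    (hexp : ∀ S : Set V, S.Nonempty → S ≠ Set.univ → αb ≤ phiIn Gb Set.univ S)
    (D : Set (Sym2 V)) (hD : D ⊆ Gb.edgeSet)
    (VH : Set V) (α' : ℝ) (hα' : α' < αb / 2)
    (S : Set V) (hSsub : S ⊆ VH) (hSne : S.Nonempty)
    (hSsize : S.ncard ≤ (VH \ S).ncard)
    (hSphi : phiIn (Gb.deleteEdges D) VH S < α') :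
    (αb / (2 * (Δ : ℝ))) * (S.ncard : ℝ) ≤
      ((S ∩ (({v : V | ∃ e ∈ D, v ∈ e} ∪
        {v : V | ∃ e ∈ cutEdgesIn (Gb.deleteEdges D) Set.univ VH, v ∈ e}) ∩ VH)).ncard : ℝ) :=
  stmt7_general Gb Δ αb hdeg hexp D VH α' hα' S hSsub hSne hSsize hSphi
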